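/- Let n ≥ 1 and let λ : Fin n → ℝ satisfy 0 < λ 1 ≤ λ 2 ≤ ... ≤ λ n. Define F : (Fin n → ℝ) → ℝ by F(Z) = log₂(1 + λ₁ Z₁) + Σ_{j=2}^{n} [log₂(1 + λ_j Z_j) − log₂(1 + λ_{j−1} Z_j)]. Then F is concave on the convex set {Z : Z_j ≥ 0 for all j}. (Theorem 1: the objective of problem P5 is concave, so P5—whose constraints are linear—is a convex optimization problem.) -/

import Mathlib

/-!
Each summand depends on a single coordinate `Z j`, so it suffices that
`z ↦ log (1 + a z) - log (1 + b z)` is concave on `[0, ∞)` whenever `0 ≤ b ≤ a`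
(the first term is the case `b = 0`). Its derivative `(a - b) / ((1 + a z) (1 + b z))`
has a nonnegative numerator and a positive increasing denominator, hence is antitone.
-/

open Set

theorem ConcaveOn.finset_sum {𝕜 E β ι : Type*} [Semiring 𝕜] [PartialOrder 𝕜]
    [AddCommMonoid E] [AddCommMonoid β] [PartialOrder β] [IsOrderedAddMonoid β]
    [SMul 𝕜 E] [Module 𝕜 β] {s : Set E} (hs : Convex 𝕜 s) (t : Finset ι) {f : ι → E → β}
    (hf : ∀ i ∈ t, ConcaveOn 𝕜 s (f i)) : ConcaveOn 𝕜 s (fun x => ∑ i ∈ t, f i x) := by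
  simpa only [Finset.sum_fn] using
    Finset.sum_induction f (ConcaveOn 𝕜 s) (fun _ _ => ConcaveOn.add) (concaveOn_const 0 hs) hf

theorem hasDerivAt_log_one_add_mul {a z : ℝ} (h : 1 + a * z ≠ 0) :
    HasDerivAt (fun z => Real.log (1 + a * z)) (a / (1 + a * z)) z := by
  simpa using (((hasDerivAt_id' z).const_mul a).const_add 1).log h

theorem concaveOn_log_one_add_mul_sub_log_one_add_mul {a b : ℝ} (hb : 0 ≤ b) (hba : b ≤ a) :
    ConcaveOn ℝ (Ici 0) (fun z => Real.log (1 + a * z) - Real.log (1 + b * z)) := by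
  have ha : 0 ≤ a := hb.trans hba
  have hpos : ∀ {c z : ℝ}, 0 ≤ c → 0 ≤ z → 0 < 1 + c * z := fun hc hz => by positivity
  have hderiv : ∀ z ∈ interior (Ici (0 : ℝ)),
      HasDerivAt (fun z => Real.log (1 + a * z) - Real.log (1 + b * z))
        ((a - b) / ((1 + a * z) * (1 + b * z))) z := by
    intro z hz
    rw [interior_Ici] at hz
    have hA := hpos ha hz.le
    have hB := hpos hb hz.le
    refine ((hasDerivAt_log_one_add_mul hA.ne').sub
      (hasDerivAt_log_one_add_mul hB.ne')).congr_deriv ?_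
    rw [div_sub_div _ _ hA.ne' hB.ne']
    ring
  refine AntitoneOn.concaveOn_of_deriv (convex_Ici 0) ?_
    (fun z hz => (hderiv z hz).differentiableAt.differentiableWithinAt) ?_
  · exact (ContinuousOn.log (by fun_prop) fun z hz => (hpos ha hz).ne').sub
      (ContinuousOn.log (by fun_prop) fun z hz => (hpos hb hz).ne')
  · intro x hx y hy hxy
    rw [(hderiv x hx).deriv, (hderiv y hy).deriv]
    rw [interior_Ici] at hx hy
    exact div_le_div_of_nonneg_left (sub_nonneg.2 hba) (mul_pos (hpos ha hx.le) (hpos hb hx.le))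
      (mul_le_mul (by gcongr) (by gcongr) (hpos hb hx.le).le (hpos ha hy.le).le)

theorem concaveOn_logb_one_add_mul_sub_logb_one_add_mul {β a b : ℝ} (hβ : 1 ≤ β) (hb : 0 ≤ b)
    (hba : b ≤ a) :
    ConcaveOn ℝ (Ici 0) (fun z => Real.logb β (1 + a * z) - Real.logb β (1 + b * z)) := by
  have h := (concaveOn_log_one_add_mul_sub_log_one_add_mul hb hba).smul
    (inv_nonneg.2 (Real.log_nonneg hβ))
  simpa only [Real.logb, smul_eq_mul, div_eq_inv_mul, mul_sub] using h

def nonnegOrthant (n : ℕ) : Set (ℕ → ℝ) := {Z | ∀ j, 1 ≤ j → j ≤ n → 0 ≤ Z j}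

theorem convex_nonnegOrthant (n : ℕ) : Convex ℝ (nonnegOrthant n) := by
  intro x hx y hy s t hs ht _ j hj1 hjn
  have := hx j hj1 hjn
  have := hy j hj1 hjn
  simp only [Pi.add_apply, Pi.smul_apply, smul_eq_mul]
  positivity

theorem ConcaveOn.comp_eval_nonnegOrthant {n j : ℕ} (hj1 : 1 ≤ j) (hjn : j ≤ n) {g : ℝ → ℝ}
    (hg : ConcaveOn ℝ (Ici 0) g) : ConcaveOn ℝ (nonnegOrthant n) (fun Z => g (Z j)) :=
  (hg.comp_linearMap (LinearMap.proj (φ := fun _ : ℕ => ℝ) j)).subset (fun _ hZ => hZ j hj1 hjn)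
    (convex_nonnegOrthant n)

theorem nonneg_of_nonneg_of_monotone {n : ℕ} {lam : ℕ → ℝ} (h1 : 0 ≤ lam 1)
    (hmono : ∀ j : ℕ, 2 ≤ j → j ≤ n → lam (j - 1) ≤ lam j) {k : ℕ} (hk1 : 1 ≤ k)
    (hkn : k ≤ n) : 0 ≤ lam k := by
  induction k, hk1 using Nat.le_induction with
  | base => exact h1
  | succ k hk ih => exact (ih (by omega)).trans (hmono (k + 1) (by omega) hkn)

/-- Theorem 1 (concavity of the objective of P5): with channel gains
`0 < λ 1 ≤ λ 2 ≤ ... ≤ λ n` (users indexed `1, ..., n`), the function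
`F(Z) = log₂(1 + λ 1 * Z 1) + Σ_{j=2}^{n} [log₂(1 + λ j * Z j) − log₂(1 + λ (j−1) * Z j)]`
is concave on the convex set `{Z : Z j ≥ 0 for all j ∈ {1, ..., n}}`. -/
theorem stmt_4 (n : ℕ) (hn : 1 ≤ n) (lam : ℕ → ℝ)
    (hpos : 0 < lam 1)
    (hmono : ∀ j : ℕ, 2 ≤ j → j ≤ n → lam (j - 1) ≤ lam j) :
    ConcaveOn ℝ {Z : ℕ → ℝ | ∀ j : ℕ, 1 ≤ j → j ≤ n → 0 ≤ Z j}
      (fun Z => Real.logb 2 (1 + lam 1 * Z 1)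
        + ∑ j ∈ Finset.Icc 2 n,
            (Real.logb 2 (1 + lam j * Z j) - Real.logb 2 (1 + lam (j - 1) * Z j))) := by
  have hfirst : ConcaveOn ℝ (nonnegOrthant n) (fun Z => Real.logb 2 (1 + lam 1 * Z 1)) := by
    simpa using ConcaveOn.comp_eval_nonnegOrthant le_rfl hn
      (concaveOn_logb_one_add_mul_sub_logb_one_add_mul one_le_two le_rfl hpos.le)
  have hsum := ConcaveOn.finset_sum (convex_nonnegOrthant n) (Finset.Icc 2 n)
    (f := fun j Z => Real.logb 2 (1 + lam j * Z j) - Real.logb 2 (1 + lam (j - 1) * Z j))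
    fun j hj => by
      obtain ⟨hj2, hjn⟩ := Finset.mem_Icc.1 hj
      exact ConcaveOn.comp_eval_nonnegOrthant (by omega) hjn
        (concaveOn_logb_one_add_mul_sub_logb_one_add_mul one_le_two
          (nonneg_of_nonneg_of_monotone hpos.le hmono (by omega) (by omega)) (hmono j hj2 hjn))
  exact hfirst.add hsum
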